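/- Let G be a connected simple graph on n ≥ 3 vertices with Randić index R, algebraic connectivity a, and diameter D. Then R·a ≥ 8√(n-1)/(nD²). -/

import Mathlib

open Finset Real Matrix

/-- The Randić index of a finite simple graph:
`R(G) = ∑_{uv ∈ E(G)} 1/√(d(u)·d(v))`. -/
noncomputable def randicIndex {V : Type*} [Fintype V] (G : SimpleGraph V) : ℝ :=
  letI : DecidableRel G.Adj := Classical.decRel _
  ∑ e ∈ G.edgeFinset,
    Sym2.lift ⟨fun u v => 1 / Real.sqrt ((G.degree u : ℝ) * (G.degree v : ℝ)),
      fun u v => by simp [mul_comm]⟩ e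

/-- The algebraic connectivity of a graph on `Fin n`: the second smallest eigenvalue
of the Laplacian matrix, characterized (via Courant–Fischer, since the all-ones vector
is an eigenvector of the smallest eigenvalue `0`) as the infimum of the Rayleigh
quotient over nonzero vectors orthogonal to the all-ones vector. -/
noncomputable def algebraicConnectivity {n : ℕ} (G : SimpleGraph (Fin n)) : ℝ :=
  letI : DecidableRel G.Adj := Classical.decRel _
  sInf {r : ℝ | ∃ x : Fin n → ℝ, x ≠ 0 ∧ (∑ i, x i) = 0 ∧
    r = (x ⬝ᵥ ((G.lapMatrix ℝ).mulVec x)) / (x ⬝ᵥ x)}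

/-- The edge connectivity of a graph: the least number of edges whose deletion
disconnects the graph. -/
noncomputable def edgeConnectivity {V : Type*} [Fintype V] (G : SimpleGraph V) : ℕ :=
  sInf {k : ℕ | ∃ s : Set (Sym2 V), s ⊆ G.edgeSet ∧ s.ncard = k ∧
    ¬ (G.deleteEdges s).Connected}

/-- The star `K_{1,n-1}` on vertex set `Fin n`: vertex `0` is adjacent to all others. -/
def starGraph (n : ℕ) : SimpleGraph (Fin n) where
  Adj i j := i ≠ j ∧ ((i : ℕ) = 0 ∨ (j : ℕ) = 0)
  symm := ⟨fun i j h => ⟨h.1.symm, h.2.symm⟩⟩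
  loopless := ⟨fun i h => h.1 rfl⟩

set_option linter.unusedSectionVars false

/-!
Bollobás–Erdős: every degree lies in `[1, n - 1]`, so each edge `uv` satisfies
`1 / √(d_u d_v) ≥ √(n - 1) / n · (1 / d_u + 1 / d_v)`, and the right-hand sides add up to
`√(n - 1)`; hence `R ≥ √(n - 1)`.
Mohar: if `x ⊥ 𝟙` takes its extreme values at `p` and `q`, then `‖x‖² ≤ n (x_p - x_q)² / 4`,
while Cauchy–Schwarz along a shortest `p`–`q` path gives `(x_p - x_q)² ≤ D · xᵀ L x`;
hence `a ≥ 4 / (n D) ≥ 8 / (n D²)` when `D ≥ 2`. If `D = 1` the graph is complete, so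
`a = n ≥ 8 / n`.
-/

theorem List.sq_sum_le_length_mul_sum_sq (l : List ℝ) :
    l.sum ^ 2 ≤ l.length * (l.map (· ^ 2)).sum := by
  have h := sq_sum_le_card_mul_sum_sq (s := Finset.univ) (f := fun i : Fin l.length => l[i.1])
  rwa [Fin.sum_univ_getElem, Fin.sum_univ_fun_getElem l (· ^ 2), Finset.card_univ,
    Fintype.card_fin] at h

theorem Real.sqrt_div_add_one_mul_inv_add_inv_le {N a b : ℝ} (ha : 1 ≤ a) (haN : a ≤ N)
    (hb : 1 ≤ b) (hbN : b ≤ N) : √N / (N + 1) * (a⁻¹ + b⁻¹) ≤ 1 / √(a * b) := by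
  have hab : 0 < a * b := by positivity
  have hs : 0 < √(a * b) := Real.sqrt_pos.mpr hab
  have hN : 0 < N + 1 := by linarith
  -- `(N a - b) (N b - a) ≥ 0` is the squared form of `√N (a + b) ≤ (N + 1) √(a b)`.
  have hkey : √N * (a + b) ≤ (N + 1) * √(a * b) := by
    rw [← Real.sqrt_sq (by linarith : 0 ≤ a + b), ← Real.sqrt_sq (by linarith : 0 ≤ N + 1),
      ← Real.sqrt_mul (by linarith), ← Real.sqrt_mul (by positivity)]
    refine Real.sqrt_le_sqrt ?_
    nlinarith [mul_nonneg (by nlinarith : 0 ≤ N * a - b) (by nlinarith : 0 ≤ N * b - a)]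
  calc √N / (N + 1) * (a⁻¹ + b⁻¹) = √N * (a + b) / ((N + 1) * √(a * b) ^ 2) := by
        rw [Real.sq_sqrt hab.le]; field_simp; ring
    _ ≤ (N + 1) * √(a * b) / ((N + 1) * √(a * b) ^ 2) := by gcongr
    _ = 1 / √(a * b) := by field_simp

theorem four_mul_dotProduct_self_le_of_sum_eq_zero {ι : Type*} [Fintype ι] {x : ι → ℝ}
    {a b : ℝ} (hsum : ∑ i, x i = 0) (ha : ∀ i, a ≤ x i) (hb : ∀ i, x i ≤ b) :
    4 * (x ⬝ᵥ x) ≤ Fintype.card ι * (b - a) ^ 2 := by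
  have hdot : x ⬝ᵥ x ≤ -(Fintype.card ι * (a * b)) :=
    calc x ⬝ᵥ x ≤ ∑ i, ((a + b) * x i - a * b) :=
          Finset.sum_le_sum fun i _ => by nlinarith [ha i, hb i]
      _ = -(Fintype.card ι * (a * b)) := by
          rw [Finset.sum_sub_distrib, ← Finset.mul_sum, hsum]
          simp
  nlinarith [mul_nonneg (Nat.cast_nonneg (Fintype.card ι) : (0 : ℝ) ≤ _) (sq_nonneg (a + b))]

theorem SimpleGraph.Walk.sum_map_darts_sub {V : Type*} {G : SimpleGraph V} (x : V → ℝ) {u v : V}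
    (w : G.Walk u v) : (w.darts.map fun d => x d.fst - x d.snd).sum = x u - x v := by
  induction w with
  | nil => simp
  | cons _ _ ih => simp [ih]

namespace SimpleGraph

variable {V : Type*} [Fintype V]

theorem dotProduct_lapMatrix_top_mulVec [DecidableEq V] (x : V → ℝ) :
    x ⬝ᵥ ((⊤ : SimpleGraph V).lapMatrix ℝ *ᵥ x) =
      Fintype.card V * (x ⬝ᵥ x) - (∑ i, x i) ^ 2 := by
  have h := (⊤ : SimpleGraph V).lapMatrix_toLinearMap₂' ℝ x
  rw [Matrix.toLinearMap₂'_apply'] at h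
  have hdiag : ∀ i j : V, (if (⊤ : SimpleGraph V).Adj i j then (x i - x j) ^ 2 else 0) =
      (x i - x j) ^ 2 := fun i j => by
    by_cases hij : i = j <;> simp [hij]
  simp_rw [h, hdiag, sub_sq, Finset.sum_add_distrib, Finset.sum_sub_distrib, Finset.sum_const,
    Finset.card_univ, nsmul_eq_mul, mul_assoc, ← Finset.mul_sum, ← Finset.sum_mul, dotProduct,
    ← sq]
  ring

variable (G : SimpleGraph V) [DecidableRel G.Adj]

theorem sum_darts_eq_sum_sum_ite_adj (f : V → V → ℝ) :
    ∑ d : G.Dart, f d.fst d.snd = ∑ i, ∑ j, if G.Adj i j then f i j else 0 := by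
  rw [← Fintype.sum_prod_type', ← Finset.sum_filter]
  exact Finset.sum_bij' (fun d _ => d.toProd) (fun p hp => ⟨p, (Finset.mem_filter.mp hp).2⟩)
    (fun d _ => by simp [d.adj]) (fun _ _ => Finset.mem_univ _)
    (fun _ _ => rfl) (fun _ _ => rfl) (fun _ _ => rfl)

theorem sum_darts_eq_two_mul_sum_edgeFinset (f : V → V → ℝ) (hf : ∀ u v, f u v = f v u) :
    ∑ d : G.Dart, f d.fst d.snd = 2 * ∑ e ∈ G.edgeFinset, Sym2.lift ⟨f, hf⟩ e := by
  classical
  rw [← Finset.sum_fiberwise_of_maps_to (g := Dart.edge) (t := G.edgeFinset)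
    (fun d _ => G.mem_edgeFinset.mpr d.edge_mem), Finset.mul_sum]
  refine Finset.sum_congr rfl fun e he => ?_
  have hconst : ∀ d ∈ ({d : G.Dart | d.edge = e} : Finset _),
      f d.fst d.snd = Sym2.lift ⟨f, hf⟩ e := by
    rintro d hd
    rw [← (Finset.mem_filter.mp hd).2]
    rfl
  rw [Finset.sum_congr rfl hconst, Finset.sum_const,
    G.dart_edge_fiber_card e (G.mem_edgeFinset.mp he), nsmul_eq_mul, Nat.cast_ofNat]

theorem sum_darts_fst_eq_sum_degree_mul (f : V → ℝ) :
    ∑ d : G.Dart, f d.fst = ∑ v, G.degree v * f v := by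
  classical
  rw [← Finset.sum_fiberwise' Finset.univ (fun d : G.Dart => d.fst) f]
  simp only [Finset.sum_const, G.dart_fst_fiber_card_eq_degree, nsmul_eq_mul]

theorem sum_darts_snd_eq_sum_darts_fst (f : V → ℝ) :
    ∑ d : G.Dart, f d.snd = ∑ d : G.Dart, f d.fst :=
  Fintype.sum_equiv Dart.symm_involutive.toPerm _ _ fun _ => rfl

theorem sum_edgeFinset_inv_degree_add_inv_degree (h : ∀ v, ∃ w, G.Adj v w) :
    ∑ e ∈ G.edgeFinset, Sym2.lift ⟨fun u v => (G.degree u : ℝ)⁻¹ + (G.degree v : ℝ)⁻¹,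
      fun _ _ => add_comm _ _⟩ e = Fintype.card V := by
  have hdeg : ∀ v, (G.degree v : ℝ) * (G.degree v : ℝ)⁻¹ = 1 := fun v => by
    obtain ⟨w, hw⟩ := h v
    have : 0 < G.degree v := (G.degree_pos_iff_exists_adj v).mpr ⟨w, hw⟩
    field_simp
  have h2 := G.sum_darts_eq_two_mul_sum_edgeFinset
    (fun u v => (G.degree u : ℝ)⁻¹ + (G.degree v : ℝ)⁻¹) fun _ _ => add_comm _ _
  rw [Finset.sum_add_distrib, G.sum_darts_snd_eq_sum_darts_fst fun v => (G.degree v : ℝ)⁻¹,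
    G.sum_darts_fst_eq_sum_degree_mul fun v => (G.degree v : ℝ)⁻¹] at h2
  simp only [hdeg, Finset.sum_const, Finset.card_univ, nsmul_eq_mul, mul_one] at h2
  linarith

theorem dotProduct_lapMatrix_mulVec [DecidableEq V] (x : V → ℝ) :
    x ⬝ᵥ (G.lapMatrix ℝ *ᵥ x) =
      ∑ e ∈ G.edgeFinset, Sym2.lift ⟨fun i j => (x i - x j) ^ 2, fun i j => by ring⟩ e := by
  have h := G.lapMatrix_toLinearMap₂' ℝ x
  rw [Matrix.toLinearMap₂'_apply'] at h
  rw [h, ← sum_darts_eq_sum_sum_ite_adj,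
    G.sum_darts_eq_two_mul_sum_edgeFinset (fun i j => (x i - x j) ^ 2)
      fun i j => by ring]
  ring

variable {G} [DecidableEq V]

theorem Walk.IsTrail.sq_sub_le_length_mul_dotProduct_lapMatrix_mulVec {u v : V} {w : G.Walk u v}
    (hw : w.IsTrail) (x : V → ℝ) :
    (x u - x v) ^ 2 ≤ w.length * (x ⬝ᵥ (G.lapMatrix ℝ *ᵥ x)) := by
  set l := w.darts.map fun d => x d.fst - x d.snd
  have hlen : l.length = w.length := by simp [l]
  have henergy : (l.map (· ^ 2)).sum ≤ x ⬝ᵥ (G.lapMatrix ℝ *ᵥ x) := by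
    rw [G.dotProduct_lapMatrix_mulVec]
    calc (l.map (· ^ 2)).sum
        = ∑ e ∈ w.edges.toFinset,
            Sym2.lift ⟨fun i j => (x i - x j) ^ 2, fun i j => by ring⟩ e := by
          rw [List.sum_toFinset _ hw.edges_nodup]
          simp only [l, Walk.edges, List.map_map]
          rfl
      _ ≤ _ := by
          refine Finset.sum_le_sum_of_subset_of_nonneg (fun e he => ?_) fun e _ _ => ?_
          · exact G.mem_edgeFinset.mpr (w.edges_subset_edgeSet (List.mem_toFinset.mp he))
          · induction e with | _ i j => exact sq_nonneg _
  calc (x u - x v) ^ 2 = l.sum ^ 2 := by rw [Walk.sum_map_darts_sub]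
    _ ≤ (l.length : ℝ) * (l.map (· ^ 2)).sum := l.sq_sum_le_length_mul_sum_sq
    _ ≤ (w.length : ℝ) * (x ⬝ᵥ (G.lapMatrix ℝ *ᵥ x)) := by rw [hlen]; gcongr

/-- Mohar's bound `a(G) ≥ 4 / (n D)`, in Rayleigh-quotient form. -/
theorem Connected.four_mul_dotProduct_self_le (hG : G.Connected) {x : V → ℝ}
    (hsum : ∑ i, x i = 0) :
    4 * (x ⬝ᵥ x) ≤ Fintype.card V * G.diam * (x ⬝ᵥ (G.lapMatrix ℝ *ᵥ x)) := by
  have : Nonempty V := hG.nonempty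
  obtain ⟨p, -, hp⟩ := Finset.exists_max_image Finset.univ x Finset.univ_nonempty
  obtain ⟨q, -, hq⟩ := Finset.exists_min_image Finset.univ x Finset.univ_nonempty
  obtain ⟨w, hw, hwlen⟩ := hG.exists_path_of_dist p q
  have hlen : (w.length : ℝ) ≤ G.diam := by
    rw [hwlen]
    exact_mod_cast G.dist_le_diam (G.connected_iff_ediam_ne_top.mp hG)
  have hQ : 0 ≤ x ⬝ᵥ (G.lapMatrix ℝ *ᵥ x) := by
    simpa using (G.posSemidef_lapMatrix ℝ).dotProduct_mulVec_nonneg x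
  calc 4 * (x ⬝ᵥ x) ≤ Fintype.card V * (x p - x q) ^ 2 :=
        four_mul_dotProduct_self_le_of_sum_eq_zero hsum (fun i => hq i (Finset.mem_univ i))
          fun i => hp i (Finset.mem_univ i)
    _ ≤ Fintype.card V * (w.length * (x ⬝ᵥ (G.lapMatrix ℝ *ᵥ x))) := by
        gcongr
        exact hw.isTrail.sq_sub_le_length_mul_dotProduct_lapMatrix_mulVec x
    _ ≤ Fintype.card V * G.diam * (x ⬝ᵥ (G.lapMatrix ℝ *ᵥ x)) := by
        rw [mul_assoc]
        gcongr

end SimpleGraph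

theorem sqrt_card_sub_one_le_randicIndex {V : Type*} [Fintype V] (G : SimpleGraph V)
    (h : ∀ v, ∃ w, G.Adj v w) : √((Fintype.card V : ℝ) - 1) ≤ randicIndex G := by
  classical
  have hdeg_pos : ∀ v, (1 : ℝ) ≤ G.degree v := fun v => by
    obtain ⟨w, hw⟩ := h v
    exact_mod_cast (G.degree_pos_iff_exists_adj v).mpr ⟨w, hw⟩
  have hdeg_le : ∀ v, (G.degree v : ℝ) ≤ Fintype.card V - 1 := fun v => by
    have := G.degree_lt_card_verts v
    rw [le_sub_iff_add_le]
    exact_mod_cast this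
  set N : ℝ := Fintype.card V - 1
  calc √N = √N / (N + 1) * Fintype.card V := by
        rcases isEmpty_or_nonempty V with hV | ⟨⟨v⟩⟩
        · simp [N, Real.sqrt_eq_zero_of_nonpos]
        · have : 0 < N + 1 := by linarith [hdeg_pos v, hdeg_le v]
          simp only [N, sub_add_cancel] at this ⊢
          field_simp
    _ = ∑ e ∈ G.edgeFinset, Sym2.lift ⟨fun u v => √N / (N + 1) *
          ((G.degree u : ℝ)⁻¹ + (G.degree v : ℝ)⁻¹), fun _ _ => congrArg _ (add_comm _ _)⟩ e := by
        rw [← G.sum_edgeFinset_inv_degree_add_inv_degree h, Finset.mul_sum]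
        refine Finset.sum_congr rfl fun e _ => ?_
        induction e with | _ u v => rfl
    _ ≤ randicIndex G := by
        unfold randicIndex
        refine Finset.sum_le_sum fun e _ => ?_
        induction e with
        | _ u v =>
          exact Real.sqrt_div_add_one_mul_inv_add_inv_le (hdeg_pos u) (hdeg_le u) (hdeg_pos v)
            (hdeg_le v)

theorem le_algebraicConnectivity {n : ℕ} (hn : 2 ≤ n) (G : SimpleGraph (Fin n))
    [DecidableRel G.Adj] {c : ℝ}
    (h : ∀ x : Fin n → ℝ, ∑ i, x i = 0 → c * (x ⬝ᵥ x) ≤ x ⬝ᵥ (G.lapMatrix ℝ *ᵥ x)) :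
    c ≤ algebraicConnectivity G := by
  unfold algebraicConnectivity
  rw [Subsingleton.elim (Classical.decRel G.Adj) ‹_›]
  let i : Fin n := ⟨0, by omega⟩
  let j : Fin n := ⟨1, by omega⟩
  have hij : i ≠ j := by simp [i, j, Fin.ext_iff]
  refine le_csInf ⟨_, Pi.single i 1 - Pi.single j 1, ?_, ?_, rfl⟩ ?_
  · intro h0
    simpa [hij] using congrFun h0 i
  · simp [Finset.sum_sub_distrib]
  · rintro r ⟨x, hx, hsum, rfl⟩
    have hxx : 0 < x ⬝ᵥ x := by simpa using dotProduct_self_star_pos_iff.mpr hx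
    rw [le_div_iff₀ hxx]
    exact h x hsum

theorem eight_div_card_mul_diam_sq_le_algebraicConnectivity {n : ℕ} (hn : 3 ≤ n)
    {G : SimpleGraph (Fin n)} (hG : G.Connected) :
    8 / (n * (G.diam : ℝ) ^ 2) ≤ algebraicConnectivity G := by
  classical
  have : Nontrivial (Fin n) := Fin.nontrivial_iff_two_le.mpr (by omega)
  have hD : G.diam ≠ 0 := G.diam_ne_zero_of_ediam_ne_top (G.connected_iff_ediam_ne_top.mp hG)
  have hn' : (3 : ℝ) ≤ n := by exact_mod_cast hn
  rcases eq_or_ne G.diam 1 with hD1 | hD1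
  · obtain rfl := G.diam_eq_one.mp hD1
    rw [hD1]
    refine le_algebraicConnectivity (by omega) ⊤ fun x hx => ?_
    rw [SimpleGraph.dotProduct_lapMatrix_top_mulVec, hx, Fintype.card_fin]
    have hxx : 0 ≤ x ⬝ᵥ x := Finset.sum_nonneg fun i _ => mul_self_nonneg (x i)
    have h8 : 8 / (n * (1 : ℕ) ^ 2 : ℝ) ≤ n := by
      rw [Nat.cast_one, one_pow, mul_one, div_le_iff₀ (by positivity)]
      nlinarith
    nlinarith [mul_le_mul_of_nonneg_right h8 hxx]
  · have hD2 : (2 : ℝ) ≤ G.diam := by exact_mod_cast (by omega : 2 ≤ G.diam)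
    refine le_algebraicConnectivity (by omega) G fun x hx => ?_
    have hmohar := hG.four_mul_dotProduct_self_le hx
    rw [Fintype.card_fin] at hmohar
    have hxx : 0 ≤ x ⬝ᵥ x := Finset.sum_nonneg fun i _ => mul_self_nonneg (x i)
    rw [div_mul_eq_mul_div, div_le_iff₀ (by positivity)]
    nlinarith [mul_le_mul_of_nonneg_left hmohar (by linarith : (0 : ℝ) ≤ G.diam)]

theorem randic_mul_algConn_ge_of_diam
    {n : ℕ} (hn : 3 ≤ n) (G : SimpleGraph (Fin n)) (hG : G.Connected) :
    randicIndex G * algebraicConnectivity G ≥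
      8 * Real.sqrt ((n : ℝ) - 1) / ((n : ℝ) * (G.diam : ℝ) ^ 2) := by
  have : Nontrivial (Fin n) := Fin.nontrivial_iff_two_le.mpr (by omega)
  have hR : √((n : ℝ) - 1) ≤ randicIndex G := by
    simpa using sqrt_card_sub_one_le_randicIndex G hG.preconnected.exists_adj_of_nontrivial
  have ha := eight_div_card_mul_diam_sq_le_algebraicConnectivity hn hG
  calc 8 * √((n : ℝ) - 1) / (n * (G.diam : ℝ) ^ 2)
      = √((n : ℝ) - 1) * (8 / (n * (G.diam : ℝ) ^ 2)) := by ring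
    _ ≤ randicIndex G * algebraicConnectivity G :=
        mul_le_mul hR ha (by positivity) ((Real.sqrt_nonneg _).trans hR)
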